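/- arXiv:2011.03648 — 2 statements merged into one kernel-verified Lean document; each statement's English description precedes it below -/
import Mathlib

section
/- Let λ > 0 and let q : ℝ → Quaternion ℝ be differentiable with ‖q(t)‖ = 1 for all t ≥ 0 and satisfy the closed-loop sliding-surface kinematics q'(t) = (1/2) · q(t) * ⟦−λ · sgn₊(q°(t)) · q⃗(t)⟧ for all t ≥ 0. If ‖q⃗(0)‖ < 1, then for all t ≥ 0 one has ‖q⃗(t)‖² ≤ ‖q⃗(0)‖² · exp(−λ · √(1 − ‖q⃗(0)‖²) · t); i.e., the vector part of the error quaternion converges exponentially to 0. -/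
noncomputable section

/-- `sgn₊ x = 1` if `x ≥ 0` and `-1` if `x < 0`. -/
def sgnPlus (x : ℝ) : ℝ := if 0 ≤ x then 1 else -1

/-- The vector (imaginary) part of a quaternion, as a vector in Euclidean `ℝ³`. -/
def vecPart (p : Quaternion ℝ) : EuclideanSpace ℝ (Fin 3) := WithLp.toLp 2 ![p.imI, p.imJ, p.imK]

/-- The pure-imaginary quaternion `⟦v⟧` with vector part `v`. -/
def quatOfVec (v : EuclideanSpace ℝ (Fin 3)) : Quaternion ℝ := ⟨0, v 0, v 1, v 2⟩

/-! The commanded angular velocity `-λ sgn₊(q°) q⃗` is parallel to `q⃗`, so the cross product in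
the vector part of `q ⊗ ω` vanishes and `q⃗' = -(λ/2) |q°| q⃗`. Hence `V = ‖q⃗‖²` satisfies
`V' = -λ |q°| V ≤ 0`; since `V` decreases and `q°² + V = 1`, `|q°| ≥ √(1 - V(0))`, and Grönwall's
inequality gives the exponential bound. -/

open Real

@[simp] lemma vecPart_apply_zero (p : Quaternion ℝ) : vecPart p 0 = p.imI := rfl

@[simp] lemma vecPart_apply_one (p : Quaternion ℝ) : vecPart p 1 = p.imJ := rfl

@[simp] lemma vecPart_apply_two (p : Quaternion ℝ) : vecPart p 2 = p.imK := rfl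

@[simp] lemma quatOfVec_re (v : EuclideanSpace ℝ (Fin 3)) : (quatOfVec v).re = 0 := rfl

@[simp] lemma quatOfVec_imI (v : EuclideanSpace ℝ (Fin 3)) : (quatOfVec v).imI = v 0 := rfl

@[simp] lemma quatOfVec_imJ (v : EuclideanSpace ℝ (Fin 3)) : (quatOfVec v).imJ = v 1 := rfl

@[simp] lemma quatOfVec_imK (v : EuclideanSpace ℝ (Fin 3)) : (quatOfVec v).imK = v 2 := rfl

lemma sgnPlus_mul_self (x : ℝ) : sgnPlus x * x = |x| := by
  unfold sgnPlus
  split_ifs with h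
  · rw [one_mul, abs_of_nonneg h]
  · rw [abs_of_neg (not_le.1 h), neg_one_mul]

lemma sq_norm_vecPart (p : Quaternion ℝ) :
    ‖vecPart p‖ ^ 2 = p.imI ^ 2 + p.imJ ^ 2 + p.imK ^ 2 := by
  rw [EuclideanSpace.norm_eq, Real.sq_sqrt (by positivity)]
  simp [vecPart, Fin.sum_univ_three, sq_abs]

lemma sq_re_add_sq_norm_vecPart (p : Quaternion ℝ) : p.re ^ 2 + ‖vecPart p‖ ^ 2 = ‖p‖ ^ 2 := by
  rw [sq_norm_vecPart, sq ‖p‖, ← Quaternion.normSq_eq_norm_mul_self, Quaternion.normSq_def']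
  ring

def vecPartCLM : Quaternion ℝ →L[ℝ] EuclideanSpace ℝ (Fin 3) :=
  LinearMap.toContinuousLinearMap
    { toFun := vecPart
      map_add' := fun p q => by ext i; fin_cases i <;> simp [vecPart]
      map_smul' := fun c p => by ext i; fin_cases i <;> simp [vecPart] }

lemma HasDerivAt.vecPart {q : ℝ → Quaternion ℝ} {q' : Quaternion ℝ} {t : ℝ}
    (hq : HasDerivAt q q' t) : HasDerivAt (fun s => vecPart (q s)) (vecPart q') t :=
  vecPartCLM.hasFDerivAt.comp_hasDerivAt t hq

lemma vecPart_smul (c : ℝ) (p : Quaternion ℝ) : vecPart (c • p) = c • vecPart p :=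
  vecPartCLM.map_smul c p

lemma vecPart_mul_quatOfVec_smul_vecPart (c : ℝ) (p : Quaternion ℝ) :
    vecPart (p * quatOfVec (c • vecPart p)) = (c * p.re) • vecPart p := by
  ext i
  fin_cases i <;> simp [Quaternion.imI_mul, Quaternion.imJ_mul, Quaternion.imK_mul] <;> ring

lemma hasDerivAt_sq_norm_vecPart_of_sliding {lam t : ℝ} {q : ℝ → Quaternion ℝ}
    (hq : HasDerivAt q
      ((1 / 2 : ℝ) • (q t * quatOfVec ((-(lam * sgnPlus (q t).re)) • vecPart (q t)))) t) :
    HasDerivAt (fun s => ‖vecPart (q s)‖ ^ 2) (-(lam * |(q t).re|) * ‖vecPart (q t)‖ ^ 2) t := by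
  refine hq.vecPart.norm_sq.congr_deriv ?_
  rw [vecPart_smul, vecPart_mul_quatOfVec_smul_vecPart, inner_smul_right, inner_smul_right,
    real_inner_self_eq_norm_sq, ← sgnPlus_mul_self]
  ring

lemma le_mul_exp_of_hasDerivAt_le_mul {f f' : ℝ → ℝ} {K a : ℝ}
    (hf : ∀ t ≥ a, HasDerivAt f (f' t) t) (bound : ∀ t ≥ a, f' t ≤ K * f t) :
    ∀ t ≥ a, f t ≤ f a * exp (K * (t - a)) := by
  intro t ht
  have hcont : ContinuousOn f (Set.Icc a t) := fun s hs =>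
    (hf s hs.1).continuousAt.continuousWithinAt
  have := le_gronwallBound_of_liminf_deriv_right_le hcont
    (fun s hs r hr => (hf s hs.1).hasDerivWithinAt.liminf_right_slope_le hr) le_rfl
    (fun s hs => (add_zero (K * f s)).symm ▸ bound s hs.1) t ⟨ht, le_rfl⟩
  rwa [gronwallBound_ε0] at this

theorem sliding_surface_exponential_decay_general
    (lam : ℝ) (hlam : 0 < lam) (q : ℝ → Quaternion ℝ)
    (hq : Differentiable ℝ q)
    (hunit : ∀ t ≥ (0 : ℝ), ‖q t‖ = 1)
    (hdyn : ∀ t ≥ (0 : ℝ), deriv q t =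
      (1 / 2 : ℝ) • (q t * quatOfVec ((-(lam * sgnPlus (q t).re)) • vecPart (q t)))) :
    ∀ t ≥ (0 : ℝ), ‖vecPart (q t)‖ ^ 2 ≤
      ‖vecPart (q 0)‖ ^ 2 *
        Real.exp (-(lam * Real.sqrt (1 - ‖vecPart (q 0)‖ ^ 2) * t)) := by
  set V : ℝ → ℝ := fun s => ‖vecPart (q s)‖ ^ 2
  have hV : ∀ s ≥ (0 : ℝ), HasDerivAt V (-(lam * |(q s).re|) * V s) s := fun s hs =>
    hasDerivAt_sq_norm_vecPart_of_sliding (hdyn s hs ▸ (hq s).hasDerivAt)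
  have hV_le : ∀ s ≥ (0 : ℝ), V s ≤ V 0 := fun s hs => by
    simpa using le_mul_exp_of_hasDerivAt_le_mul (K := 0) hV
      (fun s _ => by simp only [zero_mul, neg_mul, neg_nonpos]; positivity) s hs
  have hre : ∀ s ≥ (0 : ℝ), √(1 - V 0) ≤ |(q s).re| := fun s hs => by
    rw [← Real.sqrt_sq_eq_abs]
    have hsum := sq_re_add_sq_norm_vecPart (q s)
    rw [hunit s hs] at hsum
    exact Real.sqrt_le_sqrt (by linarith [hV_le s hs])
  intro t ht
  have hgronwall := le_mul_exp_of_hasDerivAt_le_mul (K := -(lam * √(1 - V 0))) hV (fun s hs => by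
    rw [neg_mul, neg_mul, neg_le_neg_iff]
    gcongr
    exact hre s hs) t ht
  simpa [neg_mul] using hgronwall

theorem sliding_surface_exponential_decay
    (lam : ℝ) (hlam : 0 < lam) (q : ℝ → Quaternion ℝ)
    (hq : Differentiable ℝ q)
    (hunit : ∀ t ≥ (0 : ℝ), ‖q t‖ = 1)
    (hdyn : ∀ t ≥ (0 : ℝ), deriv q t =
      (1 / 2 : ℝ) • (q t * quatOfVec ((-(lam * sgnPlus (q t).re)) • vecPart (q t))))
    (hinit : ‖vecPart (q 0)‖ < 1) :
    ∀ t ≥ (0 : ℝ), ‖vecPart (q t)‖ ^ 2 ≤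
      ‖vecPart (q 0)‖ ^ 2 *
        Real.exp (-(lam * Real.sqrt (1 - ‖vecPart (q 0)‖ ^ 2) * t)) :=
  sliding_surface_exponential_decay_general lam hlam q hq hunit hdyn

end
end

section
/- (Barbalat's lemma.) Let f : [0,∞) → ℝ be uniformly continuous and suppose the limit lim_{t→∞} ∫₀ᵗ f(τ) dτ exists and is finite. Then f(t) → 0 as t → ∞. -/
open Filter Topology

theorem barbalat (f : ℝ → ℝ)
    (hf : UniformContinuousOn f (Set.Ici 0))
    (hint : ∃ L : ℝ, Tendsto (fun t => ∫ τ in (0 : ℝ)..t, f τ) atTop (𝓝 L)) :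
    Tendsto f atTop (𝓝 0) := by
  obtain ⟨L, hL⟩ := hint
  have hcont : ContinuousOn f (Set.Ici 0) := hf.continuousOn
  have hInt : ∀ a b : ℝ, 0 ≤ a → a ≤ b →
      IntervalIntegrable f MeasureTheory.volume a b := by
    intro a b ha hab
    refine (hcont.mono ?_).intervalIntegrable
    intro x hx
    rw [Set.uIcc_of_le hab] at hx
    exact le_trans ha hx.1
  by_contra hnot
  rw [Metric.tendsto_atTop] at hnot
  push_neg at hnot
  obtain ⟨ε, hε, hfreq⟩ := hnot
  obtain ⟨δ, hδpos, hδ⟩ := Metric.uniformContinuousOn_iff.mp hf (ε/2) (by linarith)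
  set d : ℝ := min δ 1 / 2 with hd
  have hd0 : 0 < d := half_pos (lt_min hδpos one_pos)
  have hdδ : d < δ := lt_of_lt_of_le (half_lt_self (lt_min hδpos one_pos)) (min_le_left _ _)
  rw [Metric.tendsto_atTop] at hL
  obtain ⟨N, hN⟩ := hL (ε * d / 4) (by positivity)
  obtain ⟨t, ht, hft⟩ := hfreq (max N 0)
  have ht0 : (0 : ℝ) ≤ t := le_trans (le_max_right N 0) ht
  have htN : N ≤ t := le_trans (le_max_left N 0) ht
  rw [Real.dist_eq, sub_zero] at hft
  -- pointwise estimate on [t, t+d]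
  have hptw : ∀ τ ∈ Set.Icc t (t + d), |f τ - f t| < ε / 2 := by
    intro τ hτ
    have hτ0 : (0 : ℝ) ≤ τ := le_trans ht0 hτ.1
    have hdist : dist τ t < δ := by
      rw [Real.dist_eq, abs_of_nonneg (by linarith [hτ.1])]
      linarith [hτ.2]
    have := hδ τ hτ0 t ht0 hdist
    rwa [Real.dist_eq] at this
  have hIf : IntervalIntegrable f MeasureTheory.volume t (t + d) :=
    hInt t (t + d) ht0 (by linarith)
  have hI0t : IntervalIntegrable f MeasureTheory.volume 0 t := hInt 0 t le_rfl ht0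
  have hsplit : (∫ τ in (0:ℝ)..t, f τ) + (∫ τ in t..(t+d), f τ)
      = ∫ τ in (0:ℝ)..(t+d), f τ :=
    intervalIntegral.integral_add_adjacent_intervals hI0t hIf
  have hnear1 : dist (∫ τ in (0:ℝ)..t, f τ) L < ε * d / 4 := hN t htN
  have hnear2 : dist (∫ τ in (0:ℝ)..(t+d), f τ) L < ε * d / 4 :=
    hN (t + d) (by linarith)
  rw [Real.dist_eq] at hnear1 hnear2
  have hIsmall : |∫ τ in t..(t+d), f τ| < ε * d / 2 := by
    have : (∫ τ in t..(t+d), f τ)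
        = ((∫ τ in (0:ℝ)..(t+d), f τ) - L) - ((∫ τ in (0:ℝ)..t, f τ) - L) := by
      rw [← hsplit]; ring
    rw [this]
    calc |((∫ τ in (0:ℝ)..(t+d), f τ) - L) - ((∫ τ in (0:ℝ)..t, f τ) - L)|
        ≤ |(∫ τ in (0:ℝ)..(t+d), f τ) - L| + |(∫ τ in (0:ℝ)..t, f τ) - L| :=
          abs_sub _ _
      _ < ε * d / 2 := by linarith
  have hIc : IntervalIntegrable (fun _ : ℝ => ε / 2) MeasureTheory.volume t (t + d) :=
    intervalIntegrable_const
  have hIc' : IntervalIntegrable (fun _ : ℝ => -(ε / 2)) MeasureTheory.volume t (t + d) :=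
    intervalIntegrable_const
  rcases le_abs.mp hft with hpos | hneg
  · -- f t ≥ ε, so f τ ≥ ε/2 on the interval
    have hlow : ∀ τ ∈ Set.Icc t (t + d), (fun _ : ℝ => ε / 2) τ ≤ f τ := by
      intro τ hτ
      have := hptw τ hτ
      have := abs_lt.mp this
      simp only
      linarith [this.1]
    have := intervalIntegral.integral_mono_on (by linarith : t ≤ t + d) hIc hIf hlow
    rw [intervalIntegral.integral_const] at this
    simp only [smul_eq_mul] at this
    have hge : ε * d / 2 ≤ ∫ τ in t..(t+d), f τ := by
      have : (t + d - t) * (ε / 2) ≤ ∫ τ in t..(t+d), f τ := this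
      nlinarith
    have := le_abs_self (∫ τ in t..(t+d), f τ)
    linarith
  · -- f t ≤ -ε
    have hup : ∀ τ ∈ Set.Icc t (t + d), f τ ≤ (fun _ : ℝ => -(ε / 2)) τ := by
      intro τ hτ
      have := abs_lt.mp (hptw τ hτ)
      simp only
      linarith [this.2]
    have := intervalIntegral.integral_mono_on (by linarith : t ≤ t + d) hIf hIc' hup
    rw [intervalIntegral.integral_const] at this
    simp only [smul_eq_mul] at this
    have hle : (∫ τ in t..(t+d), f τ) ≤ -(ε * d / 2) := by nlinarith
    have := neg_abs_le (∫ τ in t..(t+d), f τ)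
    linarith
end
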